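/- Let x_j, …, x_{T−1} ∈ ℝ^d be i.i.d. random vectors with E[x xᵀ] = H, smallest eigenvalue λ_min(H) = μ > 0, and E[‖x‖₂² x xᵀ] ⪯ R_x²·H. Let B_t = I − η·x_t x_tᵀ and let z ∈ ℝ^d be a random vector independent of all B_t. Then for any stepsize η < 1/R_x²: E[‖B_{T−1}·B_{T−2}⋯B_j·z‖²] ≤ (1 − ημ)^{T−j}·E[‖z‖²] ≤ e^{−ημ(T−j)}·E[‖z‖²]. -/

import Mathlib

/-!
For a fixed vector `v`, expanding `‖(I - η x xᵀ) v‖²` and integrating over `x` gives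
`‖v‖² - 2η vᵀHv + η² vᵀM₄v`. The fourth-moment bound `M₄ ⪯ R_x² H` and `η R_x² < 1` make this
at most `‖v‖² - η vᵀHv ≤ (1 - ημ) ‖v‖²`; applied to a unit vector, the same bound shows
`1 - ημ ≥ 0`. Since the factors `B_t` are independent of each other and of `z`, integrating out
the last factor first contracts the expected squared norm of the partial product by `1 - ημ`, so
by induction the whole product contracts by `(1 - ημ)^{T-j} ≤ e^{-ημ(T-j)}`.
-/

set_option autoImplicit false


open MeasureTheory ProbabilityTheory Real Matrix
open scoped ENNReal NNReal RealInnerProductSpace BigOperators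

noncomputable section

abbrev Vec (d : ℕ) : Type := EuclideanSpace ℝ (Fin d)

/-- The smallest eigenvalue of a Hermitian matrix. -/
def lamMin {n : ℕ} {A : Matrix (Fin n) (Fin n) ℝ} (hA : A.IsHermitian) : ℝ :=
  ⨅ i, hA.eigenvalues i

/-- Action of the matrix `I − η x xᵀ` on a vector `v`. -/
def Bapp {d : ℕ} (η : ℝ) (x v : Vec d) : Vec d := v - η • (⟪x, v⟫ • x)

/-- `chainB η x j z k = B_{j+k-1} ⋯ B_{j+1} B_j z` where `B_t = I − η x_t x_tᵀ`. -/
def chainB {d : ℕ} (η : ℝ) (x : ℕ → Vec d) (j : ℕ) (z : Vec d) : ℕ → Vec d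
  | 0 => z
  | k + 1 => Bapp η (x (j + k)) (chainB η x j z k)

/-- Extension of a `Fin N`-indexed family to `ℕ` by zero. -/
def ext0 {β : Type*} [Zero β] {N : ℕ} (f : Fin N → β) : ℕ → β :=
  fun t => if h : t < N then f ⟨t, h⟩ else 0


section QuadraticForm
variable {d : ℕ}

lemma lamMin_mul_norm_sq_le {A : Matrix (Fin d) (Fin d) ℝ} (hA : A.IsHermitian) (v : Vec d) :
    lamMin hA * ‖v‖ ^ 2 ≤ ⟪v, A.toEuclideanLin v⟫ := by
  set b := hA.eigenvectorBasis
  have hsymm := isSymmetric_toEuclideanLin_iff.mpr hA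
  have heig : ∀ i, A.toEuclideanLin (b i) = hA.eigenvalues i • b i := fun i =>
    WithLp.ofLp_injective _ (hA.mulVec_eigenvectorBasis i)
  calc lamMin hA * ‖v‖ ^ 2 = ∑ i, lamMin hA * ⟪v, b i⟫ ^ 2 := by
        rw [← real_inner_self_eq_norm_sq, ← b.sum_inner_mul_inner, Finset.mul_sum]
        simp_rw [real_inner_comm v, sq]
    _ ≤ ∑ i, hA.eigenvalues i * ⟪v, b i⟫ ^ 2 := by
        gcongr with i
        exact ciInf_le (Set.finite_range _).bddBelow i
    _ = ⟪v, A.toEuclideanLin v⟫ := by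
        rw [← b.sum_inner_mul_inner]
        refine Finset.sum_congr rfl fun i _ => ?_
        rw [← hsymm, heig, real_inner_smul_left, real_inner_comm v]
        ring

lemma inner_toEuclideanLin_eq_sum (A : Matrix (Fin d) (Fin d) ℝ) (v : Vec d) :
    ⟪v, A.toEuclideanLin v⟫ = ∑ i, ∑ k, v i * v k * A i k := by
  simp only [PiLp.inner_apply, RCLike.inner_apply, conj_trivial, Matrix.toEuclideanLin,
    Matrix.toLpLin_apply, mulVec, dotProduct, Finset.sum_mul]
  exact Finset.sum_congr rfl fun i _ => Finset.sum_congr rfl fun k _ => by ring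

lemma inner_toEuclideanLin_le_of_posSemidef_sub {A B : Matrix (Fin d) (Fin d) ℝ}
    (hAB : (B - A).PosSemidef) (v : Vec d) : ⟪v, A.toEuclideanLin v⟫ ≤ ⟪v, B.toEuclideanLin v⟫ := by
  have h : 0 ≤ ⟪v, (B - A).toEuclideanLin v⟫ := by
    rw [EuclideanSpace.inner_eq_star_dotProduct, dotProduct_comm]
    exact hAB.dotProduct_mulVec_nonneg v.ofLp
  rwa [map_sub, LinearMap.sub_apply, inner_sub_right, sub_nonneg] at h

end QuadraticForm

section moments
variable {d : ℕ} {ν : Measure (Vec d)} {w : Vec d → ℝ}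

lemma mul_inner_sq_eq_sum (c : ℝ) (x v : Vec d) :
    c * ⟪x, v⟫ ^ 2 = ∑ i, ∑ k, v i * v k * (c * (x i * x k)) := by
  simp only [PiLp.inner_apply, RCLike.inner_apply, conj_trivial]
  rw [sq, Finset.sum_mul_sum, Finset.mul_sum]
  refine Finset.sum_congr rfl fun i _ => ?_
  rw [Finset.mul_sum]
  exact Finset.sum_congr rfl fun k _ => by ring

variable (hw : AEStronglyMeasurable w ν) (h : Integrable (fun x => w x * ‖x‖ ^ 2) ν)
include hw h

lemma integrable_mul_coord_mul_coord (i k : Fin d) :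
    Integrable (fun x => w x * (x i * x k)) ν := by
  have hcoord : ∀ i : Fin d, Continuous fun x : Vec d => x i :=
    fun i => (EuclideanSpace.proj i).continuous
  refine h.mono (hw.mul ((hcoord i).mul (hcoord k)).aestronglyMeasurable) ?_
  filter_upwards with x
  simp only [norm_mul, norm_pow, norm_norm]
  gcongr
  rw [sq]
  gcongr <;> exact PiLp.norm_apply_le x _

lemma integrable_mul_inner_sq (v : Vec d) : Integrable (fun x => w x * ⟪x, v⟫ ^ 2) ν := by
  simp_rw [mul_inner_sq_eq_sum]
  exact integrable_finsetSum _ fun i _ => integrable_finsetSum _ fun k _ =>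
    (integrable_mul_coord_mul_coord hw h i k).const_mul _

lemma integral_mul_inner_sq {A : Matrix (Fin d) (Fin d) ℝ}
    (hA : ∀ i k, A i k = ∫ x, w x * (x i * x k) ∂ν) (v : Vec d) :
    ∫ x, w x * ⟪x, v⟫ ^ 2 ∂ν = ⟪v, A.toEuclideanLin v⟫ := by
  have hterm : ∀ i k, Integrable (fun x => v i * v k * (w x * (x i * x k))) ν :=
    fun i k => (integrable_mul_coord_mul_coord hw h i k).const_mul _
  simp_rw [inner_toEuclideanLin_eq_sum, hA, mul_inner_sq_eq_sum, ← integral_const_mul]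
  rw [integral_finsetSum _ fun i _ => integrable_finsetSum _ fun k _ => hterm i k]
  exact Finset.sum_congr rfl fun i _ => integral_finsetSum _ fun k _ => hterm i k

end moments

section step
variable {d : ℕ} {ν : Measure (Vec d)}

lemma norm_sq_Bapp (η : ℝ) (x v : Vec d) :
    ‖Bapp η x v‖ ^ 2 = ‖v‖ ^ 2 - 2 * η * ⟪x, v⟫ ^ 2 + η ^ 2 * (‖x‖ ^ 2 * ⟪x, v⟫ ^ 2) := by
  rw [Bapp, smul_smul, ← real_inner_self_eq_norm_sq, inner_sub_sub_self, real_inner_smul_left,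
    real_inner_smul_right, real_inner_smul_left, real_inner_smul_right,
    real_inner_self_eq_norm_sq, real_inner_self_eq_norm_sq, real_inner_comm v x]
  ring

lemma continuous_Bapp (η : ℝ) : Continuous fun p : Vec d × Vec d => Bapp η p.1 p.2 := by
  unfold Bapp
  fun_prop

variable {v : Vec d} (h2 : Integrable (fun x => ⟪x, v⟫ ^ 2) ν)
  (h4 : Integrable (fun x => ‖x‖ ^ 2 * ⟪x, v⟫ ^ 2) ν)
include h2 h4

lemma integrable_norm_sq_Bapp [IsFiniteMeasure ν] (η : ℝ) :
    Integrable (fun x => ‖Bapp η x v‖ ^ 2) ν := by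
  simp_rw [norm_sq_Bapp]
  exact ((integrable_const _).sub (h2.const_mul _)).add (h4.const_mul _)

lemma integral_norm_sq_Bapp [IsProbabilityMeasure ν] (η : ℝ) :
    ∫ x, ‖Bapp η x v‖ ^ 2 ∂ν =
      ‖v‖ ^ 2 - 2 * η * ∫ x, ⟪x, v⟫ ^ 2 ∂ν + η ^ 2 * ∫ x, ‖x‖ ^ 2 * ⟪x, v⟫ ^ 2 ∂ν := by
  have h02 : Integrable (fun x => ‖v‖ ^ 2 - 2 * η * ⟪x, v⟫ ^ 2) ν :=
    (integrable_const _).sub (h2.const_mul _)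
  simp_rw [norm_sq_Bapp]
  rw [integral_add h02 (h4.const_mul _),
    integral_sub (integrable_const _) (h2.const_mul _), integral_const, integral_const_mul,
    integral_const_mul, probReal_univ, one_smul]

end step

section contraction
variable {d : ℕ} {ν : Measure (Vec d)}

lemma integrable_inner_sq (hmom : Integrable (fun x : Vec d => ‖x‖ ^ 2) ν) (v : Vec d) :
    Integrable (fun x => ⟪x, v⟫ ^ 2) ν := by
  simpa using integrable_mul_inner_sq (w := fun _ => 1) aestronglyMeasurable_const
    (by simpa using hmom) v

lemma integrable_norm_sq_mul_inner_sq (hmom4 : Integrable (fun x : Vec d => ‖x‖ ^ 4) ν)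
    (v : Vec d) : Integrable (fun x => ‖x‖ ^ 2 * ⟪x, v⟫ ^ 2) ν :=
  integrable_mul_inner_sq (continuous_norm.pow 2).aestronglyMeasurable
    (by simpa [← pow_add] using hmom4) v

lemma nonneg_of_integral_norm_sq_Bapp_le (hd : 0 < d) {η c : ℝ}
    (h : ∀ v : Vec d, ∫ x, ‖Bapp η x v‖ ^ 2 ∂ν ≤ c * ‖v‖ ^ 2) : 0 ≤ c := by
  have hunit := h (EuclideanSpace.single ⟨0, hd⟩ 1)
  rw [PiLp.norm_single, norm_one, one_pow, mul_one] at hunit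
  exact (integral_nonneg fun x => sq_nonneg _).trans hunit

variable [IsProbabilityMeasure ν] (hmom : Integrable (fun x : Vec d => ‖x‖ ^ 2) ν)
  (hmom4 : Integrable (fun x : Vec d => ‖x‖ ^ 4) ν)
include hmom hmom4

lemma integrable_norm_sq_Bapp_of_moments (η : ℝ) (v : Vec d) :
    Integrable (fun x => ‖Bapp η x v‖ ^ 2) ν :=
  integrable_norm_sq_Bapp (integrable_inner_sq hmom v) (integrable_norm_sq_mul_inner_sq hmom4 v) η

lemma integral_norm_sq_Bapp_le {H M4 : Matrix (Fin d) (Fin d) ℝ}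
    (hH : ∀ i k, H i k = ∫ x, x i * x k ∂ν) (hM4 : ∀ i k, M4 i k = ∫ x, ‖x‖ ^ 2 * (x i * x k) ∂ν)
    (hHherm : H.IsHermitian) {Rx : ℝ} (hRx : (Rx ^ 2 • H - M4).PosSemidef)
    {η : ℝ} (hη0 : 0 < η) (hη : η < 1 / Rx ^ 2) (v : Vec d) :
    ∫ x, ‖Bapp η x v‖ ^ 2 ∂ν ≤ (1 - η * lamMin hHherm) * ‖v‖ ^ 2 := by
  have hQ : ∫ x, ⟪x, v⟫ ^ 2 ∂ν = ⟪v, H.toEuclideanLin v⟫ := by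
    simpa using integral_mul_inner_sq (w := fun _ => 1) aestronglyMeasurable_const
      (by simpa using hmom) (by simpa using hH) v
  have hQ4 : ∫ x, ‖x‖ ^ 2 * ⟪x, v⟫ ^ 2 ∂ν = ⟪v, M4.toEuclideanLin v⟫ :=
    integral_mul_inner_sq (continuous_norm.pow 2).aestronglyMeasurable
      (by simpa [← pow_add] using hmom4) hM4 v
  have hQ_nonneg : 0 ≤ ⟪v, H.toEuclideanLin v⟫ := hQ ▸ integral_nonneg fun x => sq_nonneg _
  have hM4H : ⟪v, M4.toEuclideanLin v⟫ ≤ Rx ^ 2 * ⟪v, H.toEuclideanLin v⟫ := by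
    simpa [inner_smul_right] using inner_toEuclideanLin_le_of_posSemidef_sub hRx v
  -- `1 / Rx ^ 2` is `0` when `Rx = 0`, so `hη` forces `Rx ≠ 0`
  have hRx_pos : 0 < Rx ^ 2 :=
    (sq_nonneg Rx).lt_of_ne fun h => by rw [← h, div_zero] at hη; linarith
  have hηRx : η * Rx ^ 2 < 1 := (lt_div_iff₀ hRx_pos).mp hη
  rw [integral_norm_sq_Bapp (integrable_inner_sq hmom v) (integrable_norm_sq_mul_inner_sq hmom4 v),
    hQ, hQ4]
  calc ‖v‖ ^ 2 - 2 * η * ⟪v, H.toEuclideanLin v⟫ + η ^ 2 * ⟪v, M4.toEuclideanLin v⟫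
      ≤ ‖v‖ ^ 2 - 2 * η * ⟪v, H.toEuclideanLin v⟫ + η ^ 2 * (Rx ^ 2 * ⟪v, H.toEuclideanLin v⟫) := by
        gcongr
    _ ≤ ‖v‖ ^ 2 - η * ⟪v, H.toEuclideanLin v⟫ := by
        linarith [mul_le_mul_of_nonneg_left (mul_le_mul_of_nonneg_right hηRx.le hQ_nonneg) hη0.le]
    _ ≤ (1 - η * lamMin hHherm) * ‖v‖ ^ 2 := by
        linarith [mul_le_mul_of_nonneg_left (lamMin_mul_norm_sq_le hHherm v) hη0.le]

end contraction

section chain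
variable {d : ℕ}

lemma chainB_congr (η : ℝ) {x y : ℕ → Vec d} (j : ℕ) (z : Vec d) {k : ℕ}
    (h : ∀ t < k, x (j + t) = y (j + t)) : chainB η x j z k = chainB η y j z k := by
  induction k with
  | zero => rfl
  | succ k ih =>
    simp only [chainB]
    rw [h k k.lt_succ_self, ih fun t ht => h t (ht.trans k.lt_succ_self)]

lemma ext0_update {β : Type*} [Zero β] {N : ℕ} (f : Fin N → β) (i : Fin N) (a : β) :
    ext0 (Function.update f i a) = Function.update (ext0 f) i a := by
  funext t
  by_cases ht : t < N
  · by_cases hti : t = i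
    · subst hti; simp [ext0]
    · simp [ext0, ht, hti, Fin.ext_iff]
  · have hti : t ≠ i := fun h => ht (h ▸ i.isLt)
    simp [ext0, ht, hti]

lemma measurable_ext0_apply {β : Type*} [Zero β] [MeasurableSpace β] {N : ℕ} (t : ℕ) :
    Measurable fun f : Fin N → β => ext0 f t := by
  unfold ext0
  split_ifs
  exacts [measurable_pi_apply _, measurable_const]

lemma measurable_chainB (η : ℝ) (T j k : ℕ) :
    Measurable fun ω : (Fin T → Vec d) × Vec d => chainB η (ext0 ω.1) j ω.2 k := by
  induction k with
  | zero => exact measurable_snd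
  | succ k ih =>
    exact (continuous_Bapp η).measurable.comp
      (((measurable_ext0_apply _).comp measurable_fst).prodMk ih)

end chain

section chain_bound
variable {d : ℕ} {ν : Measure (Vec d)} [IsProbabilityMeasure ν] {η : ℝ} {c : ℝ≥0∞}
  (hstep : ∀ v, ∫⁻ x, ENNReal.ofReal (‖Bapp η x v‖ ^ 2) ∂ν ≤ c * ENNReal.ofReal (‖v‖ ^ 2))
include hstep

lemma lintegral_chainB_le {T j : ℕ} (z : Vec d) {k : ℕ} (hk : j + k ≤ T) :
    ∫⁻ ω, ENNReal.ofReal (‖chainB η (ext0 ω) j z k‖ ^ 2) ∂(Measure.pi fun _ : Fin T => ν) ≤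
      c ^ k * ENNReal.ofReal (‖z‖ ^ 2) := by
  have hmeas : ∀ k, Measurable fun ω : Fin T → Vec d =>
      ENNReal.ofReal (‖chainB η (ext0 ω) j z k‖ ^ 2) := fun k =>
    (((measurable_chainB η T j k).comp measurable_prodMk_right).norm.pow_const 2).ennreal_ofReal
  induction k with
  | zero => simp [chainB]
  | succ k ih =>
    set i : Fin T := ⟨j + k, by omega⟩
    -- `B_{j+k}` reads only coordinate `i`, on which the first `k` factors do not depend
    have hrest : ∀ (ω : Fin T → Vec d) a,
        chainB η (Function.update (ext0 ω) i a) j z k = chainB η (ext0 ω) j z k :=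
      fun ω a => chainB_congr η j z fun t ht => Function.update_of_ne (by simp [i]; omega) _ _
    have hlast : ∀ (ω : Fin T → Vec d) a, chainB η (Function.update (ext0 ω) i a) j z (k + 1) =
        Bapp η a (chainB η (ext0 ω) j z k) := fun ω a => by
      rw [chainB, hrest]
      simp [i]
    calc _ ≤ ∫⁻ ω, c * ENNReal.ofReal (‖chainB η (ext0 ω) j z k‖ ^ 2)
          ∂(Measure.pi fun _ : Fin T => ν) := by
          refine lintegral_le_of_lmarginal_le {i} (hmeas _) (measurable_const.mul (hmeas k))
            fun ω => ?_
          simp only [lmarginal_singleton, ext0_update, hlast, hrest, lintegral_const,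
            measure_univ, mul_one]
          exact hstep _
      _ = c * ∫⁻ ω, ENNReal.ofReal (‖chainB η (ext0 ω) j z k‖ ^ 2)
          ∂(Measure.pi fun _ : Fin T => ν) := lintegral_const_mul _ (hmeas k)
      _ ≤ c * (c ^ k * ENNReal.ofReal (‖z‖ ^ 2)) := by gcongr; exact ih (by omega)
      _ = c ^ (k + 1) * ENNReal.ofReal (‖z‖ ^ 2) := by ring

lemma lintegral_prod_chainB_le {T j k : ℕ} (hk : j + k ≤ T) (νz : Measure (Vec d)) [SFinite νz] :
    ∫⁻ ω, ENNReal.ofReal (‖chainB η (ext0 ω.1) j ω.2 k‖ ^ 2)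
        ∂((Measure.pi fun _ : Fin T => ν).prod νz) ≤
      c ^ k * ∫⁻ v, ENNReal.ofReal (‖v‖ ^ 2) ∂νz := by
  rw [lintegral_prod_symm _
    ((measurable_chainB η T j k).norm.pow_const 2).ennreal_ofReal.aemeasurable,
    ← lintegral_const_mul _ (measurable_norm.pow_const 2).ennreal_ofReal]
  exact lintegral_mono fun z => lintegral_chainB_le hstep z hk

end chain_bound

lemma integral_prod_chainB_le {d : ℕ} {ν : Measure (Vec d)} [IsProbabilityMeasure ν] {η c : ℝ}
    (hc : 0 ≤ c) (hint : ∀ v, Integrable (fun x => ‖Bapp η x v‖ ^ 2) ν)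
    (hstep : ∀ v, ∫ x, ‖Bapp η x v‖ ^ 2 ∂ν ≤ c * ‖v‖ ^ 2)
    {T j k : ℕ} (hk : j + k ≤ T) {νz : Measure (Vec d)} [SFinite νz]
    (hz : Integrable (fun v : Vec d => ‖v‖ ^ 2) νz) :
    ∫ ω, ‖chainB η (ext0 ω.1) j ω.2 k‖ ^ 2 ∂((Measure.pi fun _ : Fin T => ν).prod νz) ≤
      c ^ k * ∫ v, ‖v‖ ^ 2 ∂νz := by
  have hstep' : ∀ v, ∫⁻ x, ENNReal.ofReal (‖Bapp η x v‖ ^ 2) ∂ν ≤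
      ENNReal.ofReal c * ENNReal.ofReal (‖v‖ ^ 2) := fun v => by
    rw [← ofReal_integral_eq_lintegral_ofReal (hint v) (ae_of_all _ fun _ => sq_nonneg _),
      ← ENNReal.ofReal_mul hc]
    exact ENNReal.ofReal_le_ofReal (hstep v)
  rw [integral_eq_lintegral_of_nonneg_ae (ae_of_all _ fun _ => sq_nonneg _)
    ((measurable_chainB η T j k).norm.pow_const 2).aestronglyMeasurable]
  refine ENNReal.toReal_le_of_le_ofReal
    (mul_nonneg (pow_nonneg hc k) (integral_nonneg fun _ => sq_nonneg _)) ?_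
  rw [ENNReal.ofReal_mul (pow_nonneg hc k), ENNReal.ofReal_pow hc,
    ofReal_integral_eq_lintegral_ofReal hz (ae_of_all _ fun _ => sq_nonneg _)]
  exact lintegral_prod_chainB_le hstep' hk νz

theorem chain_contraction_expectation_general
    (d T j : ℕ) (hd : 0 < d) (hjT : j ≤ T)
    (ν : Measure (Vec d)) [IsProbabilityMeasure ν]
    (νz : Measure (Vec d)) [IsProbabilityMeasure νz]
    (hmom : Integrable (fun x : Vec d => ‖x‖ ^ 2) ν)
    (hmom4 : Integrable (fun x : Vec d => ‖x‖ ^ 4) ν)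
    (hzmom : Integrable (fun v : Vec d => ‖v‖ ^ 2) νz)
    (H M4 : Matrix (Fin d) (Fin d) ℝ)
    (hH : ∀ i k, H i k = ∫ x, x i * x k ∂ν)
    (hM4 : ∀ i k, M4 i k = ∫ x, ‖x‖ ^ 2 * (x i * x k) ∂ν)
    (hHherm : H.IsHermitian) (μ : ℝ) (hμdef : μ = lamMin hHherm)
    (Rx : ℝ) (hRx : (Rx ^ 2 • H - M4).PosSemidef)
    (η : ℝ) (hη0 : 0 < η) (hη : η < 1 / Rx ^ 2) :
    (∫ ω, ‖chainB η (ext0 ω.1) j ω.2 (T - j)‖ ^ 2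
        ∂((Measure.pi fun _ : Fin T => ν).prod νz)) ≤
      (1 - η * μ) ^ (T - j) * ∫ v, ‖v‖ ^ 2 ∂νz ∧
    (1 - η * μ) ^ (T - j) * (∫ v, ‖v‖ ^ 2 ∂νz) ≤
      Real.exp (-(η * μ) * ((T - j : ℕ) : ℝ)) * ∫ v, ‖v‖ ^ 2 ∂νz := by
  subst hμdef
  have hstep := integral_norm_sq_Bapp_le hmom hmom4 hH hM4 hHherm hRx hη0 hη
  have hc := nonneg_of_integral_norm_sq_Bapp_le hd hstep
  refine ⟨integral_prod_chainB_le hc (integrable_norm_sq_Bapp_of_moments hmom hmom4 η) hstep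
    (Nat.add_sub_of_le hjT).le hzmom, ?_⟩
  rw [mul_comm (-(η * lamMin hHherm)), Real.exp_nat_mul]
  gcongr
  exact one_sub_le_exp_neg _

/-- expectation version of Lemma A.3. Let `x_j, …, x_{T−1}` be i.i.d.
with `E[x xᵀ] = H`, smallest eigenvalue `μ > 0` and `E[‖x‖² x xᵀ] ⪯ R_x² H`, let
`B_t = I − η x_t x_tᵀ`, and let `z` be independent of all `B_t`. For `0 < η < 1/R_x²`,
`E‖B_{T−1} ⋯ B_j z‖² ≤ (1 − ημ)^{T−j} E‖z‖² ≤ e^{−ημ(T−j)} E‖z‖²`. -/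
theorem chain_contraction_expectation
    (d T j : ℕ) (hd : 0 < d) (hjT : j ≤ T)
    (ν : Measure (Vec d)) [IsProbabilityMeasure ν]
    (νz : Measure (Vec d)) [IsProbabilityMeasure νz]
    (hmom : Integrable (fun x : Vec d => ‖x‖ ^ 2) ν)
    (hmom4 : Integrable (fun x : Vec d => ‖x‖ ^ 4) ν)
    (hzmom : Integrable (fun v : Vec d => ‖v‖ ^ 2) νz)
    (H M4 : Matrix (Fin d) (Fin d) ℝ)
    (hH : ∀ i k, H i k = ∫ x, x i * x k ∂ν)
    (hM4 : ∀ i k, M4 i k = ∫ x, ‖x‖ ^ 2 * (x i * x k) ∂ν)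
    (hHherm : H.IsHermitian) (μ : ℝ) (hμdef : μ = lamMin hHherm) (hμ : 0 < μ)
    (Rx : ℝ) (hRx : (Rx ^ 2 • H - M4).PosSemidef)
    (η : ℝ) (hη0 : 0 < η) (hη : η < 1 / Rx ^ 2) :
    (∫ ω, ‖chainB η (ext0 ω.1) j ω.2 (T - j)‖ ^ 2
        ∂((Measure.pi fun _ : Fin T => ν).prod νz)) ≤
      (1 - η * μ) ^ (T - j) * ∫ v, ‖v‖ ^ 2 ∂νz ∧
    (1 - η * μ) ^ (T - j) * (∫ v, ‖v‖ ^ 2 ∂νz) ≤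
      Real.exp (-(η * μ) * ((T - j : ℕ) : ℝ)) * ∫ v, ‖v‖ ^ 2 ∂νz :=
  chain_contraction_expectation_general d T j hd hjT ν νz hmom hmom4 hzmom H M4 hH hM4 hHherm μ
    hμdef Rx hRx η hη0 hη
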